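/- If κ : [0,∞) → ℝ satisfies that |κ| is decreasing and r ↦ r^{d-1} κ(r) is integrable on (0,∞), then for any h₀ > 0, λ > 0 and integer m ≥ 1, the sum of |κ(h₀‖k‖₂/λ)| over all lattice points k ∈ ℤ^d with ‖k‖_∞ ≥ m is at most (3^d − 1)·2^{d−1}·(λ/h₀)^d times the integral from (m−1)h₀/λ to ∞ of r^{d−1}|κ(r)| dr. -/

import Mathlib

/-!
Group the lattice points by their sup norm. The `n`-th shell `‖k‖_∞ = n` has
`(2n+1)^d - (2n-1)^d ≤ (3^d - 1) (2n-1)^(d-1)` points, all of Euclidean norm `≥ n`, so with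
unit spacing it contributes at most `(3^d - 1) (2n-1)^(d-1) |κ n|`. Since `|κ|` decreases and
`∫_{n-1}^n r^(d-1) dr ≥ (n - 1/2)^(d-1)`, this is at most
`(3^d - 1) 2^(d-1) ∫_{n-1}^n r^(d-1) |κ r| dr`; summing over `n ≥ m` gives the bound for unit
spacing, and the general one follows by scaling `r ↦ (h₀/λ) r`.
-/

open Finset MeasureTheory

namespace Pi.Int

variable {ι : Type*} [Fintype ι] [DecidableEq ι]

lemma mem_box {n : ℕ} {k : ι → ℤ} :
    k ∈ (box n : Finset (ι → ℤ)) ↔ (univ.sup fun i => (k i).natAbs) = n := by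
  cases n with
  | zero => simp [funext_iff]
  | succ n =>
    have hIcc (n : ℕ) : k ∈ Icc (-n : ι → ℤ) n ↔ (univ.sup fun i => (k i).natAbs) ≤ n := by
      simp only [mem_Icc, Pi.le_def, Finset.sup_le_iff, mem_univ, true_implies, ← forall_and,
        Pi.neg_apply, Pi.natCast_apply]
      exact forall_congr' fun i => by omega
    rw [box_succ_eq_sdiff, mem_sdiff, hIcc, hIcc]
    omega

lemma card_box_succ (n : ℕ) :
    #(box (n + 1) : Finset (ι → ℤ)) =
      (2 * n + 3) ^ Fintype.card ι - (2 * n + 1) ^ Fintype.card ι := by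
  rw [box_succ_eq_sdiff, card_sdiff_of_subset (Icc_subset_Icc (by simp) (by simp)),
    Pi.card_Icc, Pi.card_Icc]
  simp only [Pi.natCast_apply, Pi.neg_apply, Int.card_Icc, prod_const, card_univ]
  congr 2 <;> omega

end Pi.Int

lemma two_mul_pow_le_add_one_pow_sub_sub_one_pow {a : ℝ} (ha : 0 ≤ a) (d : ℕ) :
    2 * (d + 1) * a ^ d ≤ (a + 1) ^ (d + 1) - (a - 1) ^ (d + 1) := by
  set t : ℕ → ℝ := fun k => a ^ k * (1 - (-1) ^ (d + 1 - k)) * (d + 1).choose k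
  have hexpand : (a + 1) ^ (d + 1) - (a - 1) ^ (d + 1) = ∑ k ∈ range (d + 2), t k := by
    rw [sub_eq_add_neg a, add_pow, add_pow, ← sum_sub_distrib]
    exact sum_congr rfl fun k _ => by simp only [t, one_pow]; ring
  have ht : ∀ k, 0 ≤ t k := fun k => by
    have : 0 ≤ 1 - (-1 : ℝ) ^ (d + 1 - k) := sub_nonneg.2 ((le_abs_self _).trans (by simp))
    positivity
  have htd : t d = 2 * (d + 1) * a ^ d := by
    simp only [t, Nat.add_sub_cancel_left, pow_one, Nat.choose_succ_self_right]
    push_cast; ring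
  rw [hexpand, ← htd]
  exact single_le_sum (fun k _ => ht k) (mem_range.2 (by omega))

lemma add_two_pow_sub_pow_le {b : ℝ} (hb : 1 ≤ b) (d : ℕ) :
    (b + 2) ^ (d + 1) - b ^ (d + 1) ≤ (3 ^ (d + 1) - 1) * b ^ d := by
  have hexpand (x : ℝ) : (x + 2) ^ (d + 1) - x ^ (d + 1) =
      ∑ k ∈ range (d + 1), x ^ k * 2 ^ (d + 1 - k) * (d + 1).choose k := by
    rw [add_pow, sum_range_succ]; simp
  have h3 : (3 : ℝ) ^ (d + 1) - 1 =
      ∑ k ∈ range (d + 1), 2 ^ (d + 1 - k) * ((d + 1).choose k : ℝ) := by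
    convert hexpand 1 using 1 <;> norm_num
  rw [hexpand, h3, sum_mul]
  refine sum_le_sum fun k hk => ?_
  rw [mul_assoc, mul_comm]
  gcongr
  exact Nat.lt_succ_iff.1 (mem_range.1 hk)

lemma natAbs_le_sqrt_sum_sq {ι : Type*} [Fintype ι] (k : ι → ℤ) (i : ι) :
    ((k i).natAbs : ℝ) ≤ √(∑ j, (k j : ℝ) ^ 2) := by
  rw [Real.le_sqrt (by positivity) (by positivity), Nat.cast_natAbs, Int.cast_abs, sq_abs]
  exact single_le_sum (f := fun j => (k j : ℝ) ^ 2) (fun j _ => sq_nonneg _) (mem_univ i)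

section Antitone

variable {κ : ℝ → ℝ} {a b : ℝ}

lemma intervalIntegrable_pow_mul_abs (hκ : AntitoneOn (fun r => |κ r|) (Set.Ici 0))
    (ha : 0 ≤ a) (hab : a ≤ b) (d : ℕ) :
    IntervalIntegrable (fun r => r ^ d * |κ r|) volume a b := by
  have hmono : AntitoneOn (fun r => |κ r|) (Set.uIcc a b) := by
    refine hκ.mono ?_
    rw [Set.uIcc_of_le hab]
    exact Set.Icc_subset_Ici_iff hab |>.2 ha
  exact hmono.intervalIntegrable.continuousOn_mul (continuous_pow d).continuousOn

lemma pow_sub_pow_div_mul_le_integral (hκ : AntitoneOn (fun r => |κ r|) (Set.Ici 0))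
    (ha : 0 ≤ a) (hab : a ≤ b) (d : ℕ) :
    (b ^ (d + 1) - a ^ (d + 1)) / (d + 1) * |κ b| ≤ ∫ r in a..b, r ^ d * |κ r| := by
  have hpow : ∫ r in a..b, r ^ d = (b ^ (d + 1) - a ^ (d + 1)) / (d + 1) := by
    simp [integral_pow]
  rw [← hpow, ← intervalIntegral.integral_mul_const]
  have hcont : Continuous fun r : ℝ => r ^ d * |κ b| := by fun_prop
  refine intervalIntegral.integral_mono_on hab (hcont.intervalIntegrable _ _)
    (intervalIntegrable_pow_mul_abs hκ ha hab d) fun r hr => ?_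
  have hr0 : 0 ≤ r := ha.trans hr.1
  exact mul_le_mul_of_nonneg_left (hκ hr0 (hr0.trans hr.2) hr.2) (by positivity)

end Antitone

lemma intervalIntegral_le_integral_Ioi {f : ℝ → ℝ} {a b : ℝ} (hab : a ≤ b)
    (hf : IntegrableOn f (Set.Ioi a)) (hf0 : ∀ x ∈ Set.Ioi a, 0 ≤ f x) :
    ∫ x in a..b, f x ≤ ∫ x in Set.Ioi a, f x := by
  rw [intervalIntegral.integral_of_le hab]
  exact setIntegral_mono_set hf ((ae_restrict_iff' measurableSet_Ioi).2 (.of_forall hf0))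
    Set.Ioc_subset_Ioi_self.eventuallyLE

lemma sum_box_succ_abs_le_integral {κ : ℝ → ℝ} (hκ : AntitoneOn (fun r => |κ r|) (Set.Ici 0))
    (d n : ℕ) :
    ∑ k ∈ (box (n + 1) : Finset (Fin (d + 1) → ℤ)), |κ √(∑ i, (k i : ℝ) ^ 2)|
      ≤ (3 ^ (d + 1) - 1) * 2 ^ d * ∫ r in (n : ℝ)..n + 1, r ^ d * |κ r| := by
  have hn : (0 : ℝ) ≤ n := n.cast_nonneg
  have h3 : (0 : ℝ) ≤ 3 ^ (d + 1) - 1 := sub_nonneg.2 (one_le_pow₀ (by norm_num))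
  have hterm : ∀ k ∈ (box (n + 1) : Finset (Fin (d + 1) → ℤ)),
      |κ √(∑ i, (k i : ℝ) ^ 2)| ≤ |κ (n + 1)| := by
    intro k hk
    obtain ⟨i, -, hi⟩ := (Finset.le_sup_iff n.succ_pos).1 (Pi.Int.mem_box.1 hk).ge
    have : (n : ℝ) + 1 ≤ (k i).natAbs := by exact_mod_cast hi
    exact hκ (Set.mem_Ici.2 (by positivity)) (Set.mem_Ici.2 (by positivity))
      (this.trans (natAbs_le_sqrt_sum_sq k i))
  have hcard : (#(box (n + 1) : Finset (Fin (d + 1) → ℤ)) : ℝ) =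
      (2 * n + 1 + 2) ^ (d + 1) - (2 * n + 1) ^ (d + 1) := by
    rw [Pi.Int.card_box_succ, Fintype.card_fin,
      Nat.cast_sub (Nat.pow_le_pow_left (by omega) _)]
    push_cast; ring
  have hmid : (2 * n + 1 : ℝ) ^ d ≤ 2 ^ d * (((n + 1) ^ (d + 1) - n ^ (d + 1)) / (d + 1)) := by
    have h := two_mul_pow_le_add_one_pow_sub_sub_one_pow (a := 2 * n + 1) (by positivity) d
    rw [show (2 * n + 1 + 1 : ℝ) = 2 * (n + 1) by ring, show (2 * n + 1 - 1 : ℝ) = 2 * n by ring,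
      mul_pow, mul_pow, pow_succ] at h
    rw [mul_div_assoc', le_div_iff₀ (by positivity)]
    nlinarith [pow_pos (two_pos : (0 : ℝ) < 2) d]
  calc ∑ k ∈ (box (n + 1) : Finset (Fin (d + 1) → ℤ)), |κ √(∑ i, (k i : ℝ) ^ 2)|
      ≤ #(box (n + 1) : Finset (Fin (d + 1) → ℤ)) * |κ (n + 1)| := by
        simpa using sum_le_card_nsmul _ _ _ hterm
    _ ≤ (3 ^ (d + 1) - 1) * (2 * n + 1) ^ d * |κ (n + 1)| := by
        rw [hcard]
        gcongr
        exact add_two_pow_sub_pow_le (by linarith) d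
    _ ≤ (3 ^ (d + 1) - 1) *
          (2 ^ d * (((n + 1) ^ (d + 1) - n ^ (d + 1)) / (d + 1) * |κ (n + 1)|)) := by
        rw [← mul_assoc (2 ^ d : ℝ), mul_assoc]
        gcongr
    _ ≤ (3 ^ (d + 1) - 1) * 2 ^ d * ∫ r in (n : ℝ)..n + 1, r ^ d * |κ r| := by
        rw [mul_assoc _ (2 ^ d : ℝ)]
        refine mul_le_mul_of_nonneg_left (mul_le_mul_of_nonneg_left ?_ (by positivity)) h3
        exact pow_sub_pow_div_mul_le_integral hκ hn (by linarith) d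

theorem tsum_abs_le_integral_Ioi {κ : ℝ → ℝ} (hκ : AntitoneOn (fun r => |κ r|) (Set.Ici 0))
    (d m : ℕ) (hint : IntegrableOn (fun r => r ^ d * |κ r|) (Set.Ioi (m : ℝ))) :
    ∑' k : {k : Fin (d + 1) → ℤ // m + 1 ≤ univ.sup fun i => (k i).natAbs},
        |κ √(∑ i, (k.1 i : ℝ) ^ 2)|
      ≤ (3 ^ (d + 1) - 1) * 2 ^ d * ∫ r in Set.Ioi (m : ℝ), r ^ d * |κ r| := by
  set f : (Fin (d + 1) → ℤ) → ℝ := fun k => |κ √(∑ i, (k i : ℝ) ^ 2)|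
  set supNorm : (Fin (d + 1) → ℤ) → ℕ := fun k => univ.sup fun i => (k i).natAbs
  have hg0 : ∀ r ∈ Set.Ioi (m : ℝ), 0 ≤ r ^ d * |κ r| := fun r hr =>
    mul_nonneg (pow_nonneg ((m.cast_nonneg).trans hr.le) d) (abs_nonneg _)
  have h3 : (0 : ℝ) ≤ 3 ^ (d + 1) - 1 := sub_nonneg.2 (one_le_pow₀ (by norm_num))
  refine tsum_le_of_sum_le' (mul_nonneg (mul_nonneg h3 (by positivity))
    (setIntegral_nonneg measurableSet_Ioi hg0)) fun s => ?_
  set T := s.map (Function.Embedding.subtype _)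
  set N := m + T.sup supNorm
  have hT : ∀ k ∈ T, m + 1 ≤ supNorm k ∧ supNorm k ≤ T.sup supNorm := by
    intro k hk
    obtain ⟨x, -, rfl⟩ := mem_map.1 hk
    exact ⟨x.2, le_sup hk⟩
  have hmaps : ∀ k ∈ T, supNorm k - 1 ∈ Ico m N := fun k hk => by
    have := hT k hk
    simp only [mem_Ico, N]
    omega
  calc ∑ x ∈ s, f x.1 = ∑ k ∈ T, f k := by rw [sum_map]; rfl
    _ = ∑ n ∈ Ico m N, ∑ k ∈ T with supNorm k - 1 = n, f k :=
        (sum_fiberwise_of_maps_to hmaps f).symm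
    _ ≤ ∑ n ∈ Ico m N, ∑ k ∈ (box (n + 1) : Finset (Fin (d + 1) → ℤ)), f k := by
        refine sum_le_sum fun n _ => sum_le_sum_of_subset_of_nonneg (fun k hk => ?_)
          fun _ _ _ => abs_nonneg _
        obtain ⟨hkT, hkn⟩ := mem_filter.1 hk
        have := hT k hkT
        rw [Pi.Int.mem_box]
        show supNorm k = n + 1
        omega
    _ ≤ ∑ n ∈ Ico m N, (3 ^ (d + 1) - 1) * 2 ^ d * ∫ r in (n : ℝ)..n + 1, r ^ d * |κ r| :=
        sum_le_sum fun n _ => sum_box_succ_abs_le_integral hκ d n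
    _ = (3 ^ (d + 1) - 1) * 2 ^ d * ∫ r in (m : ℝ)..N, r ^ d * |κ r| := by
        rw [← mul_sum]
        congr 1
        have := intervalIntegral.sum_integral_adjacent_intervals_Ico (a := fun n : ℕ => (n : ℝ))
          (f := fun r => r ^ d * |κ r|) (μ := volume) (m := m) (n := N) (by omega)
          fun n _ => intervalIntegrable_pow_mul_abs hκ n.cast_nonneg (by simp) d
        simpa using this
    _ ≤ (3 ^ (d + 1) - 1) * 2 ^ d * ∫ r in Set.Ioi (m : ℝ), r ^ d * |κ r| := by
        refine mul_le_mul_of_nonneg_left ?_ (mul_nonneg h3 (by positivity))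
        exact intervalIntegral_le_integral_Ioi (by simp [N]) hint hg0

lemma integrableOn_Ioi_pow_mul_comp_mul_left {g : ℝ → ℝ} {d : ℕ} {c : ℝ} (hc : 0 < c) {a : ℝ}
    (hg : IntegrableOn (fun r => r ^ d * g r) (Set.Ioi (c * a))) :
    IntegrableOn (fun s => s ^ d * g (c * s)) (Set.Ioi a) := by
  have h := ((integrableOn_Ioi_comp_mul_left_iff (fun r => r ^ d * g r) a hc).2 hg).const_mul
    ((c ^ d)⁻¹)
  refine IntegrableOn.congr_fun h (fun s _ => ?_) measurableSet_Ioi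
  simp only [mul_pow, ← mul_assoc, inv_mul_cancel₀ (pow_pos hc d).ne', one_mul]

lemma integral_Ioi_pow_mul_comp_mul_left (g : ℝ → ℝ) (d : ℕ) {c : ℝ} (hc : 0 < c) (a : ℝ) :
    ∫ s in Set.Ioi a, s ^ d * g (c * s) =
      (c⁻¹) ^ (d + 1) * ∫ r in Set.Ioi (c * a), r ^ d * g r := by
  have h := integral_comp_mul_left_Ioi (fun r => r ^ d * g r) a hc
  simp only [mul_pow, mul_assoc, integral_const_mul, smul_eq_mul] at h
  rw [pow_succ, mul_assoc, ← h, ← mul_assoc, ← mul_pow, inv_mul_cancel₀ hc.ne', one_pow, one_mul]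

theorem stmt3 (d : ℕ) (hd : 1 ≤ d) (κ : ℝ → ℝ)
    (hdec : ∀ r s : ℝ, 0 ≤ r → r ≤ s → |κ s| ≤ |κ r|)
    (hint : IntegrableOn (fun r : ℝ => r ^ (d - 1) * κ r) (Set.Ioi 0))
    (h0 lam : ℝ) (h0pos : 0 < h0) (lampos : 0 < lam) (m : ℕ) (hm : 1 ≤ m) :
    ∑' k : {k : Fin d → ℤ // m ≤ Finset.univ.sup fun i => (k i).natAbs},
        |κ (h0 * Real.sqrt (∑ i, ((k.1 i : ℝ)) ^ 2) / lam)|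
      ≤ ((3 : ℝ) ^ d - 1) * 2 ^ (d - 1) * (lam / h0) ^ d *
        ∫ r in Set.Ioi (((m : ℝ) - 1) * h0 / lam), r ^ (d - 1) * |κ r| := by
  obtain ⟨d, rfl⟩ : ∃ d', d = d' + 1 := ⟨d - 1, by omega⟩
  obtain ⟨m, rfl⟩ : ∃ m', m = m' + 1 := ⟨m - 1, by omega⟩
  set c := h0 / lam
  have hc : 0 < c := div_pos h0pos lampos
  have hκc : AntitoneOn (fun s => |κ (c * s)|) (Set.Ici 0) := fun r hr s _ hrs =>
    hdec _ _ (mul_nonneg hc.le hr) (mul_le_mul_of_nonneg_left hrs hc.le)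
  have habs : IntegrableOn (fun r => r ^ d * |κ r|) (Set.Ioi (c * m)) := by
    refine (IntegrableOn.congr_fun hint.norm (fun r hr => ?_) measurableSet_Ioi).mono_set
      (Set.Ioi_subset_Ioi (by positivity))
    simp [abs_of_pos (Set.mem_Ioi.1 hr)]
  have key := tsum_abs_le_integral_Ioi hκc d m (integrableOn_Ioi_pow_mul_comp_mul_left hc habs)
  rw [integral_Ioi_pow_mul_comp_mul_left (fun r => |κ r|) d hc] at key
  have hlower : (((m + 1 : ℕ) : ℝ) - 1) * h0 / lam = c * m := by push_cast; ring
  have hscale (x : ℝ) : h0 * x / lam = c * x := by ring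
  simp only [Nat.add_sub_cancel, hlower, hscale, ← inv_div h0 lam]
  calc _ ≤ _ := key
    _ = _ := by ring
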